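/- Define for μ ∈ M and T ≥ 1 the quantity S_{T,μ} = ∑_{t=1}^{T} (∑_{ν∈M_l} J_{T,t+1,μ,ν})². Then: (a) for every μ ∈ M_l^c and every T ≥ K, S_{T,μ} ≥ (T − K + 1) · α^{2(K−1)}, and in particular lim_{T→∞} S_{T,μ} = ∞; (b) for every μ ∈ M ∖ M_l^c, sup_{T≥1} S_{T,μ} < ∞. Thus the divergence of S_{T,μ} is determined exactly by whether μ belongs to M_l^c. -/

import Mathlib

open Matrix Finset Filter

noncomputable section

/-- In-neighbourhood of `μ` in the directed graph with edge set `E`. -/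
def Nin {K : ℕ} (E : Finset (Fin K × Fin K)) (μ : Fin K) : Finset (Fin K) :=
  Finset.univ.filter (fun ν => (ν, μ) ∈ E)

/-- The set of learning models (those with at least one incoming edge). -/
def Ml {K : ℕ} (E : Finset (Fin K × Fin K)) : Finset (Fin K) :=
  Finset.univ.filter (fun μ => Nin E μ ≠ ∅)

/-- The set of models with no incoming edge (stable data sources). -/
def Mu {K : ℕ} (E : Finset (Fin K × Fin K)) : Finset (Fin K) :=
  Finset.univ.filter (fun μ => Nin E μ = ∅)

/-- The edge relation: `EdgeRel E a b` iff `(a, b) ∈ E`. -/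
def EdgeRel {K : ℕ} (E : Finset (Fin K × Fin K)) : Fin K → Fin K → Prop :=
  fun a b => (a, b) ∈ E

open Classical in
/-- Models in `M_l` not reachable by a directed path from any node of `M_u`. -/
def MlInf {K : ℕ} (E : Finset (Fin K × Fin K)) : Finset (Fin K) :=
  (Ml E).filter (fun μ => ∀ ν ∈ Mu E, ¬ Relation.TransGen (EdgeRel E) ν μ)

open Classical in
/-- Models in `M_l^∞` together with models reachable from some node of `M_l^∞`. -/
def Mlc {K : ℕ} (E : Finset (Fin K × Fin K)) : Finset (Fin K) :=
  (Ml E).filter (fun μ => μ ∈ MlInf E ∨ ∃ ν ∈ MlInf E, Relation.TransGen (EdgeRel E) ν μ)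

/-- The non-collapsing learning models. -/
def Mlnc {K : ℕ} (E : Finset (Fin K × Fin K)) : Finset (Fin K) := Ml E \ Mlc E

/-- `Jmat P t s = P_t P_{t−1} ⋯ P_s` (equal to `I` when `s = t + 1`). -/
def Jmat {K : ℕ} (P : ℕ → Matrix (Fin K) (Fin K) ℝ) (t s : ℕ) : Matrix (Fin K) (Fin K) ℝ :=
  ((List.range' s (t + 1 - s)).reverse.map P).prod

/-- The `E`-paths `v_1 → ⋯ → v_x → μ` of length `x` ending at `μ`, encoded as a function
`v : Fin (x+1) → Fin K` with `v x = μ` and `(v i, v (i+1)) ∈ E` for all `i < x`. -/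
def pathsTo {K : ℕ} (E : Finset (Fin K × Fin K)) (x : ℕ) (μ : Fin K) :
    Finset (Fin (x + 1) → Fin K) :=
  Finset.univ.filter (fun v => v (Fin.last x) = μ ∧ ∀ i : Fin x, (v i.castSucc, v i.succ) ∈ E)

end

/-!
Each row of `J_{T,t+1}` is a probability vector, and `∑_{ν ∈ M_l} J_{T,t+1,μ,ν}` is the mass that
row `μ` leaves on learning models. Models of `M_l^∞` learn only from `M_l^∞`, so they never lose
that mass; every edge carries weight at least `α`, and every node of `M_l^c` lies within `K - 1`
edges of `M_l^∞`, so after `K - 1` steps it still holds at least `α ^ (K - 1)`. This gives (a).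

Conversely `M_u` is absorbing and every node outside `M_l^c` lies within `K - 1` edges of `M_u`,
so each block of `K` steps sends a fraction at least `α ^ (K - 1)` of the learner mass into `M_u`.
Since nodes outside `M_l^c` learn only from nodes outside `M_l^c`, the learner mass decays
geometrically in `T - t`, and `S_{T,μ} ≤ K / α ^ (K - 1)`. This gives (b).
-/

section Jmat

variable {K : ℕ} {P : ℕ → Matrix (Fin K) (Fin K) ℝ}

lemma Jmat_self (t : ℕ) : Jmat P t (t + 1) = 1 := by
  simp [Jmat]

lemma Jmat_succ {t T : ℕ} (h : t ≤ T) : Jmat P (T + 1) (t + 1) = P (T + 1) * Jmat P T (t + 1) := by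
  have hlen : T + 1 + 1 - (t + 1) = (T + 1 - (t + 1)) + 1 := by omega
  have hlast : t + 1 + (T + 1 - (t + 1)) = T + 1 := by omega
  rw [Jmat, Jmat, hlen, List.range'_1_concat, hlast]
  simp

lemma Jmat_mul {t r T : ℕ} (htr : t ≤ r) (hrT : r ≤ T) :
    Jmat P T (r + 1) * Jmat P r (t + 1) = Jmat P T (t + 1) := by
  induction T, hrT using Nat.le_induction with
  | base => rw [Jmat_self, Matrix.one_mul]
  | succ T hrT ih => rw [Jmat_succ hrT, Jmat_succ (htr.trans hrT), Matrix.mul_assoc, ih]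

lemma Jmat_mem {S : Type*} [SetLike S (Matrix (Fin K) (Fin K) ℝ)]
    [SubmonoidClass S (Matrix (Fin K) (Fin K) ℝ)] {M : S} {s : ℕ} (h : ∀ t, s ≤ t → P t ∈ M)
    (T : ℕ) : Jmat P T s ∈ M := by
  refine list_prod_mem fun A hA => ?_
  obtain ⟨t, ht, rfl⟩ := List.mem_map.1 hA
  exact h t (List.mem_range'_1.1 (List.mem_reverse.1 ht)).1

end Jmat

lemma Finset.iterate_subset_iterate_card_sub_one {α : Type*} [Fintype α] [DecidableEq α]
    (f : Finset α → Finset α) (hf : ∀ A, A ⊆ f A) {A : Finset α} (hA : A.Nonempty) (n : ℕ) :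
    f^[n] A ⊆ f^[Fintype.card α - 1] A := by
  have mono : Monotone fun k => f^[k] A :=
    monotone_nat_of_le_succ fun k => by rw [Function.iterate_succ_apply']; exact hf _
  have fixed_or_large : ∀ k, f (f^[k] A) = f^[k] A ∨ k + 1 ≤ #(f^[k] A) := by
    intro k
    induction k with
    | zero => exact Or.inr hA.card_pos
    | succ k ih =>
      rw [Function.iterate_succ_apply']
      by_cases hfix : f (f^[k] A) = f^[k] A
      · exact Or.inl (by rw [hfix, hfix])
      · have hlt := Finset.card_lt_card ((hf _).ssubset_of_ne (Ne.symm hfix))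
        exact Or.inr (by rcases ih with h | h <;> [exact absurd h hfix; omega])
  have hcard : 1 ≤ Fintype.card α := Fintype.card_pos_iff.2 ⟨hA.choose⟩
  rcases fixed_or_large (Fintype.card α - 1) with hfix | hlarge
  · rcases le_total n (Fintype.card α - 1) with hn | hn
    · exact mono hn
    · rw [← Nat.sub_add_cancel hn, Function.iterate_add_apply, Function.iterate_fixed hfix]
  · rw [Finset.eq_univ_of_card (f^[Fintype.card α - 1] A)
      (le_antisymm (Finset.card_le_univ _) (by omega))]
    exact Finset.subset_univ _

section Graph

variable {K : ℕ} {E : Finset (Fin K × Fin K)}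

variable (E) in
def addSuccessors (A : Finset (Fin K)) : Finset (Fin K) :=
  A ∪ univ.filter fun μ => ∃ ν ∈ A, (ν, μ) ∈ E

variable (E) in
def reach (C : Finset (Fin K)) (n : ℕ) : Finset (Fin K) := (addSuccessors E)^[n] C

lemma mem_reach_succ {C : Finset (Fin K)} {n : ℕ} {μ : Fin K} :
    μ ∈ reach E C (n + 1) ↔ μ ∈ reach E C n ∨ ∃ ν ∈ reach E C n, (ν, μ) ∈ E := by
  simp [reach, Function.iterate_succ_apply', addSuccessors]

lemma mem_reach_of_reflTransGen {C : Finset (Fin K)} {ν μ : Fin K} (hν : ν ∈ C)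
    (h : Relation.ReflTransGen (EdgeRel E) ν μ) : μ ∈ reach E C (K - 1) := by
  have hreach : ∃ n, μ ∈ reach E C n := by
    induction h with
    | refl => exact ⟨0, hν⟩
    | tail _ hedge ih =>
      obtain ⟨n, hn⟩ := ih
      exact ⟨n + 1, mem_reach_succ.2 (Or.inr ⟨_, hn, hedge⟩)⟩
  obtain ⟨n, hn⟩ := hreach
  simpa [reach] using Finset.iterate_subset_iterate_card_sub_one (addSuccessors E)
    (fun _ => Finset.subset_union_left) ⟨ν, hν⟩ n hn

variable (E) in
def InClosed (C : Finset (Fin K)) : Prop := ∀ ν μ, (ν, μ) ∈ E → μ ∈ C → ν ∈ C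

lemma mem_Mu_iff_notMem_Ml {μ : Fin K} : μ ∈ Mu E ↔ μ ∉ Ml E := by
  simp [Mu, Ml]

lemma mem_Nin_iff {ν μ : Fin K} : ν ∈ Nin E μ ↔ (ν, μ) ∈ E := by
  simp [Nin]

lemma mem_Ml_of_edge {ν μ : Fin K} (h : (ν, μ) ∈ E) : μ ∈ Ml E := by
  simpa [Ml, Finset.eq_empty_iff_forall_notMem, mem_Nin_iff] using ⟨ν, h⟩

lemma mem_MlInf_iff {μ : Fin K} :
    μ ∈ MlInf E ↔ μ ∈ Ml E ∧ ∀ ν ∈ Mu E, ¬ Relation.TransGen (EdgeRel E) ν μ := by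
  simp [MlInf]

lemma mem_Mlc_iff {μ : Fin K} :
    μ ∈ Mlc E ↔ μ ∈ Ml E ∧ (μ ∈ MlInf E ∨ ∃ ν ∈ MlInf E, Relation.TransGen (EdgeRel E) ν μ) := by
  simp [Mlc]

lemma MlInf_subset_Ml : MlInf E ⊆ Ml E := fun _ hμ => (mem_MlInf_iff.1 hμ).1

lemma inClosed_Mu : InClosed E (Mu E) := fun _ _ hedge hμ =>
  absurd (mem_Ml_of_edge hedge) (mem_Mu_iff_notMem_Ml.1 hμ)

lemma inClosed_MlInf : InClosed E (MlInf E) := by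
  intro ν μ hedge hμ
  rw [mem_MlInf_iff] at hμ ⊢
  refine ⟨?_, fun u hu hu_ν => hμ.2 u hu (hu_ν.tail hedge)⟩
  by_contra hν
  exact hμ.2 ν (mem_Mu_iff_notMem_Ml.2 hν) (.single hedge)

lemma inClosed_compl_Mlc : InClosed E (Mlc E)ᶜ := by
  intro ν μ hedge hμ
  rw [Finset.mem_compl, mem_Mlc_iff] at hμ ⊢
  rintro ⟨-, hν⟩
  refine hμ ⟨mem_Ml_of_edge hedge, Or.inr ?_⟩
  rcases hν with hν | ⟨κ, hκ, hκν⟩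
  · exact ⟨ν, hν, .single hedge⟩
  · exact ⟨κ, hκ, hκν.tail hedge⟩

lemma mem_reach_MlInf_of_mem_Mlc {μ : Fin K} (hμ : μ ∈ Mlc E) : μ ∈ reach E (MlInf E) (K - 1) := by
  rcases (mem_Mlc_iff.1 hμ).2 with hμ | ⟨ν, hν, hνμ⟩
  · exact mem_reach_of_reflTransGen hμ .refl
  · exact mem_reach_of_reflTransGen hν hνμ.to_reflTransGen

lemma mem_reach_Mu_of_notMem_Mlc {μ : Fin K} (hμ : μ ∉ Mlc E) : μ ∈ reach E (Mu E) (K - 1) := by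
  by_cases hMu : μ ∈ Mu E
  · exact mem_reach_of_reflTransGen hMu .refl
  have hMl : μ ∈ Ml E := by rwa [mem_Mu_iff_notMem_Ml, not_not] at hMu
  have hInf : μ ∉ MlInf E := fun h => hμ (mem_Mlc_iff.2 ⟨hMl, Or.inl h⟩)
  simp only [mem_MlInf_iff, hMl, true_and, not_forall, not_not] at hInf
  obtain ⟨u, hu, huμ⟩ := hInf
  exact mem_reach_of_reflTransGen hu huμ.to_reflTransGen

end Graph

lemma Matrix.sum_mul_apply {n R : Type*} [Fintype n] [NonUnitalNonAssocSemiring R]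
    (A B : Matrix n n R) (S : Finset n) (μ : n) :
    ∑ ν ∈ S, (A * B) μ ν = ∑ κ, A μ κ * ∑ ν ∈ S, B κ ν := by
  simp only [Matrix.mul_apply, Finset.mul_sum]
  exact Finset.sum_comm

section Stochastic

variable {K : ℕ} {E : Finset (Fin K × Fin K)} {P : ℕ → Matrix (Fin K) (Fin K) ℝ}
  {C S : Finset (Fin K)} {s t T : ℕ} {μ : Fin K}
  (hstoch : ∀ t, 1 ≤ t → P t ∈ rowStochastic ℝ (Fin K))
  (hsupp : ∀ t, 1 ≤ t → ∀ μ ν, P t μ ν ≠ 0 → (ν, μ) ∈ E ∨ ν = μ)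

-- With `False < True` on `Prop`, this says that the rows indexed by `C` vanish outside `C`.
include hsupp in
lemma Jmat_blockTriangular_of_inClosed (hC : InClosed E C) (hs : 1 ≤ s) (T : ℕ) :
    (Jmat P T s).BlockTriangular (· ∈ C) := by
  refine Jmat_mem (M := blockTriangularSubsemiring ℝ (· ∈ C)) (fun t ht w κ hlt => ?_) T
  obtain ⟨-, hw, hκ⟩ : _ ∧ w ∈ C ∧ κ ∉ C := by simpa [lt_iff_le_not_ge] using hlt
  by_contra hne
  rcases hsupp t (hs.trans ht) w κ hne with hedge | rfl
  exacts [hκ (hC κ w hedge hw), hκ hw]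

include hsupp in
lemma Jmat_apply_eq_zero_of_inClosed (hC : InClosed E C) (hs : 1 ≤ s) {w κ : Fin K}
    (hw : w ∈ C) (hκ : κ ∉ C) : Jmat P T s w κ = 0 :=
  Jmat_blockTriangular_of_inClosed hsupp hC hs T (lt_of_le_not_ge (absurd · hκ) (hκ <| · hw))

include hstoch in
lemma Jmat_mem_rowStochastic (hs : 1 ≤ s) (T : ℕ) : Jmat P T s ∈ rowStochastic ℝ (Fin K) :=
  Jmat_mem (fun t ht => hstoch t (hs.trans ht)) T

include hstoch in
lemma sum_Jmat_nonneg (hs : 1 ≤ s) : 0 ≤ ∑ ν ∈ S, Jmat P T s μ ν :=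
  Finset.sum_nonneg fun _ _ => nonneg_of_mem_rowStochastic (Jmat_mem_rowStochastic hstoch hs T)

include hstoch in
lemma sum_Jmat_le_one (hs : 1 ≤ s) : ∑ ν ∈ S, Jmat P T s μ ν ≤ 1 := by
  have hJ := Jmat_mem_rowStochastic hstoch hs T
  rw [← sum_row_of_mem_rowStochastic hJ μ]
  exact Finset.sum_le_univ_sum_of_nonneg fun _ => nonneg_of_mem_rowStochastic hJ

include hstoch in
lemma sum_Jmat_add_sum_compl (hs : 1 ≤ s) :
    ∑ ν ∈ S, Jmat P T s μ ν + ∑ ν ∈ Sᶜ, Jmat P T s μ ν = 1 := by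
  rw [Finset.sum_add_sum_compl, sum_row_of_mem_rowStochastic (Jmat_mem_rowStochastic hstoch hs T)]

include hstoch hsupp in
lemma sum_Jmat_eq_one_of_inClosed (hC : InClosed E C) (hCS : C ⊆ S) (hμ : μ ∈ C) (hs : 1 ≤ s) :
    ∑ ν ∈ S, Jmat P T s μ ν = 1 := by
  rw [← sum_row_of_mem_rowStochastic (Jmat_mem_rowStochastic hstoch hs T) μ]
  exact Finset.sum_subset (Finset.subset_univ S) fun ν _ hν =>
    Jmat_apply_eq_zero_of_inClosed hsupp hC hs hμ fun h => hν (hCS h)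

include hstoch hsupp in
lemma pow_le_sum_Jmat_of_mem_reach {α : ℝ} (hα0 : 0 ≤ α) (hα1 : α ≤ 1)
    (hPα : ∀ t, 1 ≤ t → ∀ ν μ, (ν, μ) ∈ E → α ≤ P t μ ν)
    (hC : InClosed E C) (hCS : C ⊆ S) (ht : 1 ≤ t) {n : ℕ} (hμ : μ ∈ reach E C n)
    (hT : t + n ≤ T) : α ^ n ≤ ∑ ν ∈ S, Jmat P T (t + 1) μ ν := by
  induction n generalizing T μ with
  | zero =>
    rw [pow_zero, sum_Jmat_eq_one_of_inClosed hstoch hsupp hC hCS hμ (by omega)]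
  | succ n ih =>
    rcases mem_reach_succ.1 hμ with hμ | ⟨ν, hν, hedge⟩
    · exact (pow_le_pow_of_le_one hα0 hα1 n.le_succ).trans (ih hμ (by omega))
    obtain ⟨T, rfl⟩ : ∃ T', T = T' + 1 := ⟨T - 1, by omega⟩
    rw [Jmat_succ (by omega), Matrix.sum_mul_apply]
    have hterm : ∀ κ ∈ univ, 0 ≤ P (T + 1) μ κ * ∑ ν ∈ S, Jmat P T (t + 1) κ ν := fun κ _ =>
      mul_nonneg (nonneg_of_mem_rowStochastic (hstoch _ (by omega)))
        (sum_Jmat_nonneg hstoch (by omega))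
    calc α ^ (n + 1) = α * α ^ n := pow_succ' α n
      _ ≤ P (T + 1) μ ν * ∑ κ ∈ S, Jmat P T (t + 1) ν κ := by
        have hPμν := hPα (T + 1) (by omega) ν μ hedge
        exact mul_le_mul hPμν (ih hν (by omega)) (pow_nonneg hα0 n) (hα0.trans hPμν)
      _ ≤ _ := Finset.single_le_sum hterm (Finset.mem_univ ν)

end Stochastic

lemma sum_range_pow_div_le {q : ℝ} (hq0 : 0 ≤ q) (hq1 : q < 1) {m : ℕ} (hm : 0 < m) (n : ℕ) :
    ∑ x ∈ range n, q ^ (x / m) ≤ m / (1 - q) := by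
  have hmaps : ∀ x ∈ range n, x / m ∈ range n := fun x hx =>
    mem_range.2 ((Nat.div_le_self x m).trans_lt (mem_range.1 hx))
  have hfiber : ∀ j, #((range n).filter fun x => x / m = j) ≤ m := fun j =>
    calc #((range n).filter fun x => x / m = j) ≤ #(Ico (j * m) (j * m + m)) := by
          refine Finset.card_le_card fun x hx => ?_
          rw [mem_Ico, ← (mem_filter.1 hx).2]
          exact ⟨Nat.div_mul_le_self x m, by
            have := Nat.lt_div_mul_add (a := x) hm; linarith⟩
      _ = m := by simp
  rw [← Finset.sum_fiberwise_of_maps_to hmaps]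
  calc ∑ j ∈ range n, ∑ x ∈ (range n).filter (fun x => x / m = j), q ^ (x / m)
      = ∑ j ∈ range n, #((range n).filter fun x => x / m = j) * q ^ j := by
        refine Finset.sum_congr rfl fun j _ => ?_
        rw [Finset.sum_congr rfl fun x hx => by rw [(mem_filter.1 hx).2], sum_const, nsmul_eq_mul]
    _ ≤ ∑ j ∈ range n, m * q ^ j :=
        sum_le_sum fun j _ =>
          mul_le_mul_of_nonneg_right (by exact_mod_cast hfiber j) (by positivity)
    _ ≤ m * (q ^ 0 / (1 - q)) := by
        rw [← mul_sum, range_eq_Ico]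
        exact mul_le_mul_of_nonneg_left (geom_sum_Ico_le_of_lt_one hq0 hq1) (by positivity)
    _ = m / (1 - q) := by ring

section Model

variable {K : ℕ} {E : Finset (Fin K × Fin K)} {P : ℕ → Matrix (Fin K) (Fin K) ℝ}

lemma compl_Ml : (Ml E)ᶜ = Mu E := by
  ext μ
  simp [mem_Mu_iff_notMem_Ml]

lemma edge_or_eq_of_P_ne_zero
    (hPzero : ∀ t, 1 ≤ t → ∀ μ ν : Fin K,
      ¬ ((μ ∈ Ml E ∧ ν ∈ Nin E μ) ∨ (μ = ν ∧ μ ∈ Mu E)) → P t μ ν = 0) :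
    ∀ t, 1 ≤ t → ∀ μ ν, P t μ ν ≠ 0 → (ν, μ) ∈ E ∨ ν = μ := by
  intro t ht μ ν hne
  rcases not_imp_comm.1 (hPzero t ht μ ν) hne with ⟨-, hν⟩ | ⟨rfl, -⟩
  exacts [Or.inl (mem_Nin_iff.1 hν), Or.inr rfl]

lemma P_mem_rowStochastic
    (hPzero : ∀ t, 1 ≤ t → ∀ μ ν : Fin K,
      ¬ ((μ ∈ Ml E ∧ ν ∈ Nin E μ) ∨ (μ = ν ∧ μ ∈ Mu E)) → P t μ ν = 0)
    (hPnn : ∀ t, 1 ≤ t → ∀ μ ν : Fin K, 0 ≤ P t μ ν)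
    (hPu : ∀ t, 1 ≤ t → ∀ μ ∈ Mu E, P t μ μ = 1)
    (hProw : ∀ t, 1 ≤ t → ∀ μ ∈ Ml E, ∑ ν ∈ Nin E μ, P t μ ν = 1) :
    ∀ t, 1 ≤ t → P t ∈ rowStochastic ℝ (Fin K) := by
  intro t ht
  refine mem_rowStochastic_iff_sum.2 ⟨hPnn t ht, fun μ => ?_⟩
  by_cases hμ : μ ∈ Ml E
  · rw [← hProw t ht μ hμ]
    refine (Finset.sum_subset (Finset.subset_univ _) fun ν _ hν => hPzero t ht μ ν ?_).symm
    rintro (⟨-, h⟩ | ⟨-, h⟩)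
    exacts [hν h, mem_Mu_iff_notMem_Ml.1 h hμ]
  · rw [Finset.sum_eq_single μ (fun ν _ hν => hPzero t ht μ ν ?_) (by simp)]
    · exact hPu t ht μ (mem_Mu_iff_notMem_Ml.2 hμ)
    rintro (⟨h, -⟩ | ⟨h, -⟩)
    exacts [hμ h, hν h.symm]

variable {α : ℝ} (hα0 : 0 < α) (hα1 : α < 1)
  (hstoch : ∀ t, 1 ≤ t → P t ∈ rowStochastic ℝ (Fin K))
  (hsupp : ∀ t, 1 ≤ t → ∀ μ ν, P t μ ν ≠ 0 → (ν, μ) ∈ E ∨ ν = μ)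
  (hPα : ∀ t, 1 ≤ t → ∀ ν μ : Fin K, (ν, μ) ∈ E → α ≤ P t μ ν)
  {μ : Fin K} {s t T : ℕ}

include hstoch hsupp in
lemma sum_Jmat_Ml_eq_zero_of_mem_Mu (hμ : μ ∈ Mu E) (hs : 1 ≤ s) :
    ∑ ν ∈ Ml E, Jmat P T s μ ν = 0 := by
  have hsplit := sum_Jmat_add_sum_compl hstoch (S := Ml E) (μ := μ) (T := T) hs
  rw [compl_Ml, sum_Jmat_eq_one_of_inClosed hstoch hsupp inClosed_Mu subset_rfl hμ hs] at hsplit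
  linarith

include hα0 hα1 hstoch hsupp hPα

lemma pow_le_sum_Jmat_Ml_of_mem_Mlc (hμ : μ ∈ Mlc E) (ht : 1 ≤ t) (hT : t + (K - 1) ≤ T) :
    α ^ (K - 1) ≤ ∑ ν ∈ Ml E, Jmat P T (t + 1) μ ν :=
  pow_le_sum_Jmat_of_mem_reach hstoch hsupp hα0.le hα1.le hPα inClosed_MlInf MlInf_subset_Ml ht
    (mem_reach_MlInf_of_mem_Mlc hμ) hT

lemma sum_Jmat_Ml_le_of_notMem_Mlc (hμ : μ ∉ Mlc E) (ht : 1 ≤ t) (hT : t + (K - 1) ≤ T) :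
    ∑ ν ∈ Ml E, Jmat P T (t + 1) μ ν ≤ 1 - α ^ (K - 1) := by
  have hsplit := sum_Jmat_add_sum_compl hstoch (S := Ml E) (μ := μ) (T := T) (s := t + 1) (by omega)
  have hMu := pow_le_sum_Jmat_of_mem_reach hstoch hsupp hα0.le hα1.le hPα inClosed_Mu subset_rfl ht
    (mem_reach_Mu_of_notMem_Mlc hμ) hT
  rw [compl_Ml] at hsplit
  linarith

lemma sum_Jmat_Ml_le_pow_of_notMem_Mlc (hμ : μ ∉ Mlc E) (ht : 1 ≤ t) (j : ℕ)
    (hT : t + j * K ≤ T) : ∑ ν ∈ Ml E, Jmat P T (t + 1) μ ν ≤ (1 - α ^ (K - 1)) ^ j := by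
  induction j generalizing T μ with
  | zero => simpa using sum_Jmat_le_one hstoch (by omega)
  | succ j ih =>
    rw [add_one_mul] at hT
    obtain ⟨r, rfl⟩ : ∃ r, T = r + K := ⟨T - K, by omega⟩
    have hq : 0 ≤ 1 - α ^ (K - 1) := sub_nonneg.2 (pow_le_one₀ hα0.le hα1.le)
    have hJ := Jmat_mem_rowStochastic hstoch (s := r + 1) (by omega) (r + K)
    rw [← Jmat_mul (t := t) (r := r) (by omega) (by omega), Matrix.sum_mul_apply]
    calc ∑ κ, Jmat P (r + K) (r + 1) μ κ * ∑ ν ∈ Ml E, Jmat P r (t + 1) κ ν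
        = ∑ κ ∈ Ml E, Jmat P (r + K) (r + 1) μ κ * ∑ ν ∈ Ml E, Jmat P r (t + 1) κ ν := by
          refine (Finset.sum_subset (Finset.subset_univ _) fun κ _ hκ => ?_).symm
          rw [sum_Jmat_Ml_eq_zero_of_mem_Mu hstoch hsupp (mem_Mu_iff_notMem_Ml.2 hκ) (by omega),
            mul_zero]
      _ ≤ ∑ κ ∈ Ml E, Jmat P (r + K) (r + 1) μ κ * (1 - α ^ (K - 1)) ^ j := by
          refine Finset.sum_le_sum fun κ _ => ?_
          by_cases hκ : κ ∈ Mlc E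
          · rw [Jmat_apply_eq_zero_of_inClosed hsupp inClosed_compl_Mlc (by omega)
              (Finset.mem_compl.2 hμ) (by simpa using hκ), zero_mul, zero_mul]
          · exact mul_le_mul_of_nonneg_left (ih hκ (by omega)) (nonneg_of_mem_rowStochastic hJ)
      _ = (∑ κ ∈ Ml E, Jmat P (r + K) (r + 1) μ κ) * (1 - α ^ (K - 1)) ^ j :=
          (Finset.sum_mul ..).symm
      _ ≤ (1 - α ^ (K - 1)) * (1 - α ^ (K - 1)) ^ j := by
          refine mul_le_mul_of_nonneg_right ?_ (pow_nonneg hq j)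
          exact sum_Jmat_Ml_le_of_notMem_Mlc hα0 hα1 hstoch hsupp hPα hμ (by omega) (by omega)
      _ = (1 - α ^ (K - 1)) ^ (j + 1) := (pow_succ' ..).symm

lemma le_sum_sq_of_mem_Mlc (hμ : μ ∈ Mlc E) (hT : K ≤ T) :
    ((T : ℝ) - K + 1) * α ^ (2 * (K - 1)) ≤
      ∑ t ∈ Icc 1 T, (∑ ν ∈ Ml E, Jmat P T (t + 1) μ ν) ^ 2 := by
  have hK := μ.pos
  have hcard : (T : ℝ) - K + 1 = #(Icc 1 (T + 1 - K)) := by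
    rw [Nat.card_Icc, Nat.add_sub_cancel, Nat.cast_sub (by omega)]
    push_cast
    ring
  calc ((T : ℝ) - K + 1) * α ^ (2 * (K - 1))
      = ∑ t ∈ Icc 1 (T + 1 - K), (α ^ (K - 1)) ^ 2 := by
        rw [sum_const, nsmul_eq_mul, hcard, ← pow_mul, mul_comm (K - 1)]
    _ ≤ ∑ t ∈ Icc 1 (T + 1 - K), (∑ ν ∈ Ml E, Jmat P T (t + 1) μ ν) ^ 2 := by
        refine sum_le_sum fun t ht => pow_le_pow_left₀ (by positivity) ?_ 2
        have ht := mem_Icc.1 ht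
        exact pow_le_sum_Jmat_Ml_of_mem_Mlc hα0 hα1 hstoch hsupp hPα hμ ht.1 (by omega)
    _ ≤ ∑ t ∈ Icc 1 T, (∑ ν ∈ Ml E, Jmat P T (t + 1) μ ν) ^ 2 :=
        sum_le_sum_of_subset_of_nonneg (Icc_subset_Icc le_rfl (by omega)) fun _ _ _ => sq_nonneg _

lemma sum_sq_le_of_notMem_Mlc (hμ : μ ∉ Mlc E) :
    ∑ t ∈ Icc 1 T, (∑ ν ∈ Ml E, Jmat P T (t + 1) μ ν) ^ 2 ≤ K / α ^ (K - 1) := by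
  set q := 1 - α ^ (K - 1)
  have hq0 : 0 ≤ q := sub_nonneg.2 (pow_le_one₀ hα0.le hα1.le)
  have hq1 : q < 1 := sub_lt_self 1 (pow_pos hα0 _)
  calc ∑ t ∈ Icc 1 T, (∑ ν ∈ Ml E, Jmat P T (t + 1) μ ν) ^ 2
      ≤ ∑ t ∈ Icc 1 T, q ^ ((T - t) / K) := by
        refine sum_le_sum fun t ht => ?_
        have ht := mem_Icc.1 ht
        refine (pow_le_of_le_one (sum_Jmat_nonneg hstoch (by omega))
          (sum_Jmat_le_one hstoch (by omega)) two_ne_zero).trans ?_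
        exact sum_Jmat_Ml_le_pow_of_notMem_Mlc hα0 hα1 hstoch hsupp hPα hμ ht.1 _
          (by have := Nat.div_mul_le_self (T - t) K; omega)
    _ = ∑ x ∈ range T, q ^ (x / K) := by
        rw [← Ico_add_one_right_eq_Icc, sum_Ico_reflect (fun x => q ^ (x / K)) 1 le_rfl,
          range_eq_Ico]
        simp
    _ ≤ K / (1 - q) := sum_range_pow_div_le hq0 hq1 μ.pos T
    _ = K / α ^ (K - 1) := by rw [sub_sub_cancel]

end Model

theorem stmt18_general
    {K : ℕ}
    (E : Finset (Fin K × Fin K))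
    (α : ℝ) (hα0 : 0 < α) (hα1 : α < 1)
    (P : ℕ → Matrix (Fin K) (Fin K) ℝ)
    (hPzero : ∀ t, 1 ≤ t → ∀ μ ν : Fin K,
      ¬ ((μ ∈ Ml E ∧ ν ∈ Nin E μ) ∨ (μ = ν ∧ μ ∈ Mu E)) → P t μ ν = 0)
    (hPnn : ∀ t, 1 ≤ t → ∀ μ ν : Fin K, 0 ≤ P t μ ν)
    (hPu : ∀ t, 1 ≤ t → ∀ μ ∈ Mu E, P t μ μ = 1)
    (hProw : ∀ t, 1 ≤ t → ∀ μ ∈ Ml E, ∑ ν ∈ Nin E μ, P t μ ν = 1)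
    (hPα : ∀ t, 1 ≤ t → ∀ ν μ : Fin K, (ν, μ) ∈ E → α ≤ P t μ ν) :
    (∀ μ ∈ Mlc E,
      (∀ T : ℕ, K ≤ T →
        ((T : ℝ) - K + 1) * α ^ (2 * (K - 1)) ≤
          ∑ t ∈ Finset.Icc 1 T, (∑ ν ∈ Ml E, Jmat P T (t + 1) μ ν) ^ 2) ∧
      Tendsto (fun T : ℕ => ∑ t ∈ Finset.Icc 1 T, (∑ ν ∈ Ml E, Jmat P T (t + 1) μ ν) ^ 2)
        atTop atTop) ∧
    (∀ μ : Fin K, μ ∉ Mlc E →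
      ∃ C : ℝ, ∀ T : ℕ, 1 ≤ T →
        ∑ t ∈ Finset.Icc 1 T, (∑ ν ∈ Ml E, Jmat P T (t + 1) μ ν) ^ 2 ≤ C) := by
  have hstoch := P_mem_rowStochastic hPzero hPnn hPu hProw
  have hsupp := edge_or_eq_of_P_ne_zero hPzero
  refine ⟨fun μ hμ => ⟨fun T hT => le_sum_sq_of_mem_Mlc hα0 hα1 hstoch hsupp hPα hμ hT, ?_⟩,
    fun μ hμ => ⟨K / α ^ (K - 1), fun T _ => sum_sq_le_of_notMem_Mlc hα0 hα1 hstoch hsupp hPα hμ⟩⟩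
  have hlin : Tendsto (fun T : ℕ => ((T : ℝ) - K + 1) * α ^ (2 * (K - 1))) atTop atTop :=
    (tendsto_atTop_add_const_right _ 1 (tendsto_atTop_add_const_right _ (-(K : ℝ))
      tendsto_natCast_atTop_atTop)).atTop_mul_const (pow_pos hα0 _)
  exact tendsto_atTop_mono' atTop ((eventually_ge_atTop K).mono fun T hT =>
    le_sum_sq_of_mem_Mlc hα0 hα1 hstoch hsupp hPα hμ hT) hlin

/-- With `S_{T,μ} = ∑_{t=1}^T (∑_{ν∈M_l} J_{T,t+1,μ,ν})²`:
(a) for every `μ ∈ M_l^c` and `T ≥ K`, `S_{T,μ} ≥ (T − K + 1)·α^{2(K−1)}`, and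
`S_{T,μ} → ∞` as `T → ∞`; (b) for every `μ ∉ M_l^c`, `sup_{T≥1} S_{T,μ} < ∞`. -/
theorem stmt18
    {K : ℕ} (hK : 1 ≤ K)
    (E : Finset (Fin K × Fin K))
    (α : ℝ) (hα0 : 0 < α) (hα1 : α < 1)
    (P : ℕ → Matrix (Fin K) (Fin K) ℝ)
    (hPzero : ∀ t, 1 ≤ t → ∀ μ ν : Fin K,
      ¬ ((μ ∈ Ml E ∧ ν ∈ Nin E μ) ∨ (μ = ν ∧ μ ∈ Mu E)) → P t μ ν = 0)
    (hPnn : ∀ t, 1 ≤ t → ∀ μ ν : Fin K, 0 ≤ P t μ ν)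
    (hPu : ∀ t, 1 ≤ t → ∀ μ ∈ Mu E, P t μ μ = 1)
    (hProw : ∀ t, 1 ≤ t → ∀ μ ∈ Ml E, ∑ ν ∈ Nin E μ, P t μ ν = 1)
    (hPα : ∀ t, 1 ≤ t → ∀ ν μ : Fin K, (ν, μ) ∈ E → α ≤ P t μ ν) :
    (∀ μ ∈ Mlc E,
      (∀ T : ℕ, K ≤ T →
        ((T : ℝ) - K + 1) * α ^ (2 * (K - 1)) ≤
          ∑ t ∈ Finset.Icc 1 T, (∑ ν ∈ Ml E, Jmat P T (t + 1) μ ν) ^ 2) ∧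
      Tendsto (fun T : ℕ => ∑ t ∈ Finset.Icc 1 T, (∑ ν ∈ Ml E, Jmat P T (t + 1) μ ν) ^ 2)
        atTop atTop) ∧
    (∀ μ : Fin K, μ ∉ Mlc E →
      ∃ C : ℝ, ∀ T : ℕ, 1 ≤ T →
        ∑ t ∈ Finset.Icc 1 T, (∑ ν ∈ Ml E, Jmat P T (t + 1) μ ν) ^ 2 ≤ C) :=
  stmt18_general E α hα0 hα1 P hPzero hPnn hPu hProw hPα
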